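/- arXiv:1412.2180 — 2 statements merged into one kernel-verified Lean document; each statement's English description precedes it below -/
import Mathlib

section
/- Let < be the natural order 1̄<1<2̄<2<⋯<n̄<n on 𝒜ₙ, let λ and ν be partitions of n, and let d ≥ 1. Then the number of colored tableaux of shape ν with respect to <, with content λ and total color d, whose total reverse reading word is a ballot sequence and whose southwest corner contains a barred letter, equals the number of colored tableaux of shape ν with respect to <, with content λ and total color d−1, whose total reverse reading word is a ballot sequence and whose southwest corner contains an unbarred letter. -/
open scoped Classical

/-- A letter of the alphabet 𝒜ₙ: `(false, i)` is the unbarred letter `i+1`,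
`(true, i)` is the barred letter `i+1` with a bar. -/
abbrev Letter (n : ℕ) := Bool × Fin n

/-- A filling assigns an optional letter to each box of the plane; boxes outside
the underlying shape carry `none`. -/
abbrev Filling (n : ℕ) := ℕ × ℕ → Option (Letter n)

/-- `r` is a total (linear) order on `Letter n` extending the partial order of 𝒜ₙ,
in which the unbarred letters form a chain, the barred letters form a chain, and
barred and unbarred letters are incomparable. -/
def IsLinExt {n : ℕ} (r : Letter n → Letter n → Prop) : Prop :=
  IsLinearOrder (Letter n) r ∧ ∀ (b : Bool) (i j : Fin n), i ≤ j → r (b, i) (b, j)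

/-- `T` is a semistandard colored tableau of shape `sh` with respect to the total order `r`:
rows and columns weakly increase with respect to `r`, no two identical unbarred letters
share a column, and no two identical barred letters share a row. -/
def IsColoredTableau {n : ℕ} (r : Letter n → Letter n → Prop) (sh : YoungDiagram)
    (T : Filling n) : Prop :=
  (∀ c, (T c).isSome ↔ c ∈ sh) ∧
  (∀ i j₁ j₂ : ℕ, ∀ x y : Letter n, j₁ ≤ j₂ → T (i, j₁) = some x → T (i, j₂) = some y → r x y) ∧
  (∀ i₁ i₂ j : ℕ, ∀ x y : Letter n, i₁ ≤ i₂ → T (i₁, j) = some x → T (i₂, j) = some y → r x y) ∧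
  (∀ i₁ i₂ j : ℕ, ∀ a : Fin n, i₁ ≠ i₂ → T (i₁, j) = some (false, a) →
    T (i₂, j) ≠ some (false, a)) ∧
  (∀ i j₁ j₂ : ℕ, ∀ b : Fin n, j₁ ≠ j₂ → T (i, j₁) = some (true, b) →
    T (i, j₂) ≠ some (true, b))

/-- The unbarred reverse (row) reading word: unbarred entries, rows right to left,
rows top to bottom, skipping barred entries. -/
def uWord {n : ℕ} (sh : YoungDiagram) (T : Filling n) : List (Fin n) :=
  (List.range (sh.colLen 0)).flatMap fun i =>
    (List.range (sh.rowLen i)).reverse.filterMap fun j =>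
      match T (i, j) with
      | some (false, a) => some a
      | _ => none

/-- The barred (column) reading word with bars removed: barred entries, columns bottom to top,
columns left to right, skipping unbarred entries. -/
def vWord {n : ℕ} (sh : YoungDiagram) (T : Filling n) : List (Fin n) :=
  (List.range (sh.rowLen 0)).flatMap fun j =>
    (List.range (sh.colLen j)).reverse.filterMap fun i =>
      match T (i, j) with
      | some (true, b) => some b
      | _ => none

/-- The total reverse (row-column) reading word `w(T) = u(T)v(T)`. -/
def wWord {n : ℕ} (sh : YoungDiagram) (T : Filling n) : List (Fin n) :=
  uWord sh T ++ vWord sh T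

/-- A word over `{1, …, n}` (encoded with `Fin n`, where `⟨i, _⟩` stands for the letter `i+1`)
is a ballot sequence if every prefix contains at least as many `i`'s as `i+1`'s. -/
def IsBallot {n : ℕ} (w : List (Fin n)) : Prop :=
  ∀ p : List (Fin n), p <+: w → ∀ i : ℕ, ∀ h : i + 1 < n,
    p.count ⟨i + 1, h⟩ ≤ p.count ⟨i, Nat.lt_of_succ_lt h⟩

/-- A word over `{1, …, n}` is an `α`-ballot sequence if in every prefix the number of
`i+1`'s minus the number of `i`'s is at most `αᵢ − α_{i+1}`. -/
def IsAlphaBallot {n : ℕ} (α : Fin n → ℕ) (w : List (Fin n)) : Prop :=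
  ∀ p : List (Fin n), p <+: w → ∀ i : ℕ, ∀ h : i + 1 < n,
    p.count ⟨i + 1, h⟩ + α ⟨i + 1, h⟩ ≤ p.count ⟨i, Nat.lt_of_succ_lt h⟩ + α ⟨i, Nat.lt_of_succ_lt h⟩

/-- `y` covers `x` in the order `r`: they are adjacent (consecutive) with `x` below `y`. -/
def CoveredBy {n : ℕ} (r : Letter n → Letter n → Prop) (x y : Letter n) : Prop :=
  r x y ∧ x ≠ y ∧ ∀ z, r x z → r z y → z = x ∨ z = y

/-- `x` and `y` are adjacent (consecutive) in the order `r`, in either relative order. -/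
def AdjacentIn {n : ℕ} (r : Letter n → Letter n → Prop) (x y : Letter n) : Prop :=
  CoveredBy r x y ∨ CoveredBy r y x

/-- `z` lies strictly between `x` and `y` in the order `r`. -/
def Between {n : ℕ} (r : Letter n → Letter n → Prop) (x y z : Letter n) : Prop :=
  r x z ∧ r z y ∧ z ≠ x ∧ z ≠ y

/-- The order `r` is unbarred-tight: at most one barred letter occurs between any two
consecutive unbarred letters. -/
def UnbarredTight {n : ℕ} (r : Letter n → Letter n → Prop) : Prop :=
  ∀ i : ℕ, ∀ h : i + 1 < n, ∀ b₁ b₂ : Fin n,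
    Between r (false, ⟨i, Nat.lt_of_succ_lt h⟩) (false, ⟨i + 1, h⟩) (true, b₁) →
    Between r (false, ⟨i, Nat.lt_of_succ_lt h⟩) (false, ⟨i + 1, h⟩) (true, b₂) → b₁ = b₂

/-- The order `r` is barred-tight: at most one unbarred letter occurs between any two
consecutive barred letters. -/
def BarredTight {n : ℕ} (r : Letter n → Letter n → Prop) : Prop :=
  ∀ i : ℕ, ∀ h : i + 1 < n, ∀ a₁ a₂ : Fin n,
    Between r (true, ⟨i, Nat.lt_of_succ_lt h⟩) (true, ⟨i + 1, h⟩) (false, a₁) →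
    Between r (true, ⟨i, Nat.lt_of_succ_lt h⟩) (true, ⟨i + 1, h⟩) (false, a₂) → a₁ = a₂

/-- Two boxes share an edge. -/
def BoxAdj (c d : ℕ × ℕ) : Prop :=
  (c.1 = d.1 ∧ (c.2 + 1 = d.2 ∨ d.2 + 1 = c.2)) ∨
  (c.2 = d.2 ∧ (c.1 + 1 = d.1 ∨ d.1 + 1 = c.1))

/-- `c` and `d` are joined by a chain of boxes of `S`, each sharing an edge with the next. -/
def ConnIn (S : Set (ℕ × ℕ)) (c d : ℕ × ℕ) : Prop :=
  Relation.ReflTransGen (fun u v => u ∈ S ∧ v ∈ S ∧ BoxAdj u v) c d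

/-- The orders `r` and `r'` agree except that the unbarred letter `a` and the barred letter `b̄`
are adjacent in both, with `a` immediately below `b̄` in `r` and `b̄` immediately below `a`
in `r'`. -/
def OrderSwitch {n : ℕ} (r r' : Letter n → Letter n → Prop) (a b : Fin n) : Prop :=
  CoveredBy r (false, a) (true, b) ∧ CoveredBy r' (true, b) (false, a) ∧
  ∀ x y : Letter n, ¬(x = (false, a) ∧ y = (true, b)) → ¬(x = (true, b) ∧ y = (false, a)) →
    (r x y ↔ r' x y)

/-- The fillings `T` and `T'` are related by a conversion switch at the letters `a`, `b̄`:
they agree on all boxes not containing `a` or `b̄`, the set `S` of boxes containing `a` or `b̄`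
is the same in both, and in each edge-connected component of `S` they contain the same number
of `a`'s. -/
def TableauSwitch {n : ℕ} (a b : Fin n) (T T' : Filling n) : Prop :=
  (∀ c, c ∉ {c | T c = some (false, a) ∨ T c = some (true, b)} → T' c = T c) ∧
  (∀ c, c ∈ {c | T c = some (false, a) ∨ T c = some (true, b)} ↔
    (T' c = some (false, a) ∨ T' c = some (true, b))) ∧
  (∀ c, T c = some (false, a) ∨ T c = some (true, b) →
    {d | ConnIn {e | T e = some (false, a) ∨ T e = some (true, b)} c d ∧
      T d = some (false, a)}.ncard =
    {d | ConnIn {e | T e = some (false, a) ∨ T e = some (true, b)} c d ∧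
      T' d = some (false, a)}.ncard)

/-- One step of conversion between pairs (total order, colored tableau of shape `sh`):
a single conversion switch, in either direction, through valid total orders and
colored tableaux. -/
def ConvStep {n : ℕ} (sh : YoungDiagram)
    (p q : ((Letter n → Letter n → Prop) × Filling n)) : Prop :=
  IsLinExt p.1 ∧ IsLinExt q.1 ∧ IsColoredTableau p.1 sh p.2 ∧ IsColoredTableau q.1 sh q.2 ∧
  ∃ a b : Fin n, (OrderSwitch p.1 q.1 a b ∧ TableauSwitch a b p.2 q.2) ∨
    (OrderSwitch q.1 p.1 a b ∧ TableauSwitch a b q.2 p.2)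

/-- `T` (w.r.t. `p.1`) and `T'` (w.r.t. `q.1`) correspond under conversion: they are connected
by a finite sequence of conversion switches through intermediate total orders and colored
tableaux. -/
def ConvertsTo {n : ℕ} (sh : YoungDiagram)
    (p q : ((Letter n → Letter n → Prop) × Filling n)) : Prop :=
  Relation.ReflTransGen (ConvStep sh) p q

/-- The unbarred content of a filling: `α i` is the number of unbarred letters `i` in it. -/
def unbarredContent {n : ℕ} (sh : YoungDiagram) (T : Filling n) (i : Fin n) : ℕ :=
  (sh.cells.filter fun c => T c = some (false, i)).card

/-- The total content of a filling: the number of occurrences of `i` and `ī` together. -/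
def totalContent {n : ℕ} (sh : YoungDiagram) (T : Filling n) (i : Fin n) : ℕ :=
  (sh.cells.filter fun c => T c = some (false, i) ∨ T c = some (true, i)).card

/-- The total color of a filling: the number of barred letters in it. -/
def totalColor {n : ℕ} (sh : YoungDiagram) (T : Filling n) : ℕ :=
  (sh.cells.filter fun c => (T c).map Prod.fst = some true).card

/-- The natural order `1̄ < 1 < 2̄ < 2 < ⋯ < n̄ < n` on 𝒜ₙ. -/
def natOrd (n : ℕ) : Letter n → Letter n → Prop :=
  fun x y => x.2 < y.2 ∨ (x.2 = y.2 ∧ (x.1 = true ∨ y.1 = false))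

/-- The small bar order `1̄ ≺ 2̄ ≺ ⋯ ≺ n̄ ≺ 1 ≺ 2 ≺ ⋯ ≺ n` on 𝒜ₙ. -/
def smallBarOrd (n : ℕ) : Letter n → Letter n → Prop :=
  fun x y => (x.1 = true ∧ y.1 = false) ∨ (x.1 = y.1 ∧ x.2 ≤ y.2)

/-- `f` is a semistandard skew tableau of shape `outer / inner` with entries in `{1, …, n}`:
rows weakly increase, columns strictly increase. -/
def IsSkewSSYT {n : ℕ} (outer inner : YoungDiagram) (f : ℕ × ℕ → Option (Fin n)) : Prop :=
  (∀ c, (f c).isSome ↔ (c ∈ outer ∧ c ∉ inner)) ∧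
  (∀ i j₁ j₂ : ℕ, ∀ x y : Fin n, j₁ ≤ j₂ → f (i, j₁) = some x → f (i, j₂) = some y → x ≤ y) ∧
  (∀ i₁ i₂ j : ℕ, ∀ x y : Fin n, i₁ < i₂ → f (i₁, j) = some x → f (i₂, j) = some y → x < y)

/-- The reverse row reading word of a (skew) tableau supported inside the rows of `sh`:
entries along rows right to left, rows top to bottom. -/
def revRowWord {n : ℕ} (sh : YoungDiagram) (f : ℕ × ℕ → Option (Fin n)) : List (Fin n) :=
  (List.range (sh.colLen 0)).flatMap fun i =>
    (List.range (sh.rowLen i)).reverse.filterMap fun j => f (i, j)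

/-!
Toggling the bar of the southwest corner entry is the bijection. For the natural order, the
conditions between two entries of a row never depend on the bar of the left one, and those between
two entries of a column never on the bar of the lower one; the corner is leftmost in its row and
lowest in its column, so the toggle keeps tableaux. Content is unchanged and the total color drops
by one. Finally the corner letter is the last letter of `u(T)` when unbarred and the first of
`v(T)` when barred, so toggling it only moves it across the junction of `w(T) = u(T)v(T)`.
-/

theorem Function.Involutive.ncard_eq_of_mapsTo {α : Type*} {f : α → α} {s t : Set α}
    (hf : f.Involutive) (hst : Set.MapsTo f s t) (hts : Set.MapsTo f t s) :
    s.ncard = t.ncard := by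
  have himage : f '' s = t :=
    hst.image_subset.antisymm fun x hx => ⟨f x, hts hx, hf x⟩
  rw [← himage, Set.ncard_image_of_injective s hf.injective]

section NatOrd

variable {n : ℕ}

lemma natOrd_refl (x : Letter n) : natOrd n x x :=
  .inr ⟨rfl, by cases x.1 <;> simp⟩

lemma natOrd_of_lt_or_eq_bar {x y : Letter n} (h : x.2 < y.2 ∨ x.2 = y.2 ∧ x.1 = true) :
    natOrd n x y :=
  h.imp_right fun h => ⟨h.1, .inl h.2⟩

lemma natOrd_of_lt_or_eq_unbar {x y : Letter n} (h : x.2 < y.2 ∨ x.2 = y.2 ∧ y.1 = false) :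
    natOrd n x y :=
  h.imp_right fun h => ⟨h.1, .inr h.2⟩

lemma isColoredTableau_natOrd_iff {ν : YoungDiagram} {T : Filling n} :
    IsColoredTableau (natOrd n) ν T ↔
      (∀ c, (T c).isSome ↔ c ∈ ν) ∧
      (∀ i j₁ j₂ : ℕ, ∀ x y : Letter n, j₁ < j₂ → T (i, j₁) = some x → T (i, j₂) = some y →
        x.2 < y.2 ∨ x.2 = y.2 ∧ y.1 = false) ∧
      (∀ i₁ i₂ j : ℕ, ∀ x y : Letter n, i₁ < i₂ → T (i₁, j) = some x → T (i₂, j) = some y →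
        x.2 < y.2 ∨ x.2 = y.2 ∧ x.1 = true) := by
  constructor
  · rintro ⟨hsupp, hrow, hcol, hunbar, hbar⟩
    refine ⟨hsupp, fun i j₁ j₂ x y hj hx hy => ?_, fun i₁ i₂ j x y hi hx hy => ?_⟩
    · refine (hrow i j₁ j₂ x y hj.le hx hy).imp_right fun ⟨heq, hxy⟩ => ⟨heq, ?_⟩
      obtain ⟨b, a⟩ := x; obtain ⟨b', a'⟩ := y
      simp only at heq hxy ⊢; subst heq
      rcases hxy with rfl | rfl
      · cases b'
        · rfl
        · exact absurd hy (hbar i j₁ j₂ a hj.ne hx)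
      · rfl
    · refine (hcol i₁ i₂ j x y hi.le hx hy).imp_right fun ⟨heq, hxy⟩ => ⟨heq, ?_⟩
      obtain ⟨b, a⟩ := x; obtain ⟨b', a'⟩ := y
      simp only at heq hxy ⊢; subst heq
      rcases hxy with rfl | rfl
      · rfl
      · cases b
        · exact absurd hy (hunbar i₁ i₂ j a hi.ne hx)
        · rfl
  · rintro ⟨hsupp, hrow, hcol⟩
    refine ⟨hsupp, fun i j₁ j₂ x y hj hx hy => ?_, fun i₁ i₂ j x y hi hx hy => ?_,
      fun i₁ i₂ j a hi hx hy => ?_, fun i j₁ j₂ b hj hx hy => ?_⟩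
    · rcases hj.lt_or_eq with hj | rfl
      · exact natOrd_of_lt_or_eq_unbar (hrow i j₁ j₂ x y hj hx hy)
      · obtain rfl := Option.some.inj (hx.symm.trans hy); exact natOrd_refl x
    · rcases hi.lt_or_eq with hi | rfl
      · exact natOrd_of_lt_or_eq_bar (hcol i₁ i₂ j x y hi hx hy)
      · obtain rfl := Option.some.inj (hx.symm.trans hy); exact natOrd_refl x
    · rcases hi.lt_or_gt with hi | hi
      · simpa using hcol i₁ i₂ j _ _ hi hx hy
      · simpa using hcol i₂ i₁ j _ _ hi hy hx
    · rcases hj.lt_or_gt with hj | hj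
      · simpa using hrow i j₁ j₂ _ _ hj hx hy
      · simpa using hrow i j₂ j₁ _ _ hj hy hx

end NatOrd

section FlipBar

variable {n : ℕ}

def toggleBar (x : Letter n) : Letter n := (!x.1, x.2)

def flipBar (c : ℕ × ℕ) (T : Filling n) : Filling n :=
  Function.update T c ((T c).map toggleBar)

variable {c : ℕ × ℕ} {T : Filling n}

lemma flipBar_apply_self : flipBar c T c = (T c).map toggleBar :=
  Function.update_self ..

lemma flipBar_apply_of_ne {d : ℕ × ℕ} (h : d ≠ c) : flipBar c T d = T d :=
  Function.update_of_ne h ..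

lemma flipBar_involutive (c : ℕ × ℕ) : Function.Involutive (flipBar (n := n) c) := by
  intro T
  have htoggle : toggleBar ∘ toggleBar = (id : Letter n → Letter n) := by
    funext x; simp [toggleBar]
  simp [flipBar, Option.map_map, htoggle]

lemma map_snd_flipBar (d : ℕ × ℕ) : (flipBar c T d).map Prod.snd = (T d).map Prod.snd := by
  rcases eq_or_ne d c with rfl | h
  · rw [flipBar_apply_self, Option.map_map]; rfl
  · rw [flipBar_apply_of_ne h]

lemma exists_eq_some_of_flipBar_eq_some {d : ℕ × ℕ} {x : Letter n}
    (h : flipBar c T d = some x) : ∃ y, T d = some y ∧ y.2 = x.2 := by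
  have := map_snd_flipBar (c := c) (T := T) d
  rw [h, Option.map_some, eq_comm, Option.map_eq_some_iff] at this
  exact this

lemma isSome_flipBar (d : ℕ × ℕ) : (flipBar c T d).isSome = (T d).isSome := by
  rw [← Option.isSome_map (f := Prod.snd), map_snd_flipBar, Option.isSome_map]

lemma filterMap_flipBar_of_notMem {β : Type*} (f : Option (Letter n) → Option β)
    {l : List (ℕ × ℕ)} (hc : c ∉ l) :
    l.filterMap (fun d => f (flipBar c T d)) = l.filterMap fun d => f (T d) :=
  List.filterMap_congr fun _ hd => by rw [flipBar_apply_of_ne (ne_of_mem_of_not_mem hd hc)]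

lemma totalContent_flipBar (ν : YoungDiagram) (i : Fin n) :
    totalContent ν (flipBar c T) i = totalContent ν T i := by
  have key (U : Filling n) (d : ℕ × ℕ) :
      U d = some (false, i) ∨ U d = some (true, i) ↔ (U d).map Prod.snd = some i := by
    rcases U d with _ | ⟨_ | _, a⟩ <;> simp [eq_comm]
  simp only [totalContent, key, map_snd_flipBar]

lemma totalColor_flipBar {ν : YoungDiagram} (hc : c ∈ ν) {k : Fin n} (hk : T c = some (true, k)) :
    totalColor ν T = totalColor ν (flipBar c T) + 1 := by
  have hflip : flipBar c T c = some (false, k) := by simp [flipBar_apply_self, hk, toggleBar]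
  have hcells : ν.cells.filter (fun d => (T d).map Prod.fst = some true) =
      insert c (ν.cells.filter fun d => (flipBar c T d).map Prod.fst = some true) := by
    ext d
    rcases eq_or_ne d c with rfl | hne
    · simp [hk, hc]
    · simp [flipBar_apply_of_ne hne, hne]
  rw [totalColor, totalColor, hcells, Finset.card_insert_of_notMem (by simp [hflip])]

lemma isColoredTableau_flipBar {ν : YoungDiagram} (hT : IsColoredTableau (natOrd n) ν T)
    (hleft : c.2 = 0) (hbottom : ∀ i, (i, c.2) ∈ ν → i ≤ c.1) :
    IsColoredTableau (natOrd n) ν (flipBar c T) := by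
  rw [isColoredTableau_natOrd_iff] at hT ⊢
  obtain ⟨hsupp, hrow, hcol⟩ := hT
  have hsupp' (d : ℕ × ℕ) : (flipBar c T d).isSome ↔ d ∈ ν := by rw [isSome_flipBar, hsupp]
  refine ⟨hsupp', fun i j₁ j₂ x y hj hx hy => ?_, fun i₁ i₂ j x y hi hx hy => ?_⟩
  · have hne : (i, j₂) ≠ c := fun h => by rw [← h] at hleft; omega
    rw [flipBar_apply_of_ne hne] at hy
    obtain ⟨x₀, hx₀, hsnd⟩ := exists_eq_some_of_flipBar_eq_some hx
    rw [← hsnd]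
    exact hrow i j₁ j₂ x₀ y hj hx₀ hy
  · have hne : (i₁, j) ≠ c := by
      rintro rfl
      have := hbottom i₂ ((hsupp' _).mp (by simp [hy]))
      omega
    rw [flipBar_apply_of_ne hne] at hx
    obtain ⟨y₀, hy₀, hsnd⟩ := exists_eq_some_of_flipBar_eq_some hy
    rw [← hsnd]
    exact hcol i₁ i₂ j x y₀ hi hx hy₀

end FlipBar

section ReadingWords

variable {n : ℕ}

def unbarredEntry : Option (Letter n) → Option (Fin n)
  | some (false, a) => some a
  | _ => none

def barredEntry : Option (Letter n) → Option (Fin n)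
  | some (true, b) => some b
  | _ => none

def rowReadingCells (ν : YoungDiagram) : List (ℕ × ℕ) :=
  (List.range (ν.colLen 0)).flatMap fun i => (List.range (ν.rowLen i)).reverse.map fun j => (i, j)

def colReadingCells (ν : YoungDiagram) : List (ℕ × ℕ) :=
  (List.range (ν.rowLen 0)).flatMap fun j => (List.range (ν.colLen j)).reverse.map fun i => (i, j)

lemma uWord_eq_filterMap (ν : YoungDiagram) (T : Filling n) :
    uWord ν T = (rowReadingCells ν).filterMap fun c => unbarredEntry (T c) := by
  simp only [uWord, rowReadingCells, List.filterMap_flatMap, List.filterMap_map]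
  rfl

lemma vWord_eq_filterMap (ν : YoungDiagram) (T : Filling n) :
    vWord ν T = (colReadingCells ν).filterMap fun c => barredEntry (T c) := by
  simp only [vWord, colReadingCells, List.filterMap_flatMap, List.filterMap_map]
  rfl

variable {ν : YoungDiagram}

lemma rowReadingCells_eq_concat (h : (0, 0) ∈ ν) :
    ∃ l, rowReadingCells ν = l ++ [(ν.colLen 0 - 1, 0)] ∧ (ν.colLen 0 - 1, 0) ∉ l := by
  obtain ⟨m, hm⟩ : ∃ m, ν.colLen 0 = m + 1 :=
    Nat.exists_eq_add_one.mpr (YoungDiagram.mem_iff_lt_colLen.mp h)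
  obtain ⟨r, hr⟩ : ∃ r, ν.rowLen m = r + 1 :=
    Nat.exists_eq_add_one.mpr (YoungDiagram.mem_iff_lt_rowLen.mp
      (YoungDiagram.mem_iff_lt_colLen.mpr (by omega)))
  refine ⟨(List.range m).flatMap (fun i => (List.range (ν.rowLen i)).reverse.map fun j => (i, j)) ++
    ((List.range r).map Nat.succ).reverse.map (fun j => (m, j)), ?_, by simp [hm]⟩
  rw [rowReadingCells, hm, List.range_succ, List.flatMap_append, List.flatMap_singleton, hr,
    List.range_succ_eq_map]
  simp

lemma colReadingCells_eq_cons (h : (0, 0) ∈ ν) :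
    ∃ l, colReadingCells ν = (ν.colLen 0 - 1, 0) :: l ∧ (ν.colLen 0 - 1, 0) ∉ l := by
  obtain ⟨m, hm⟩ : ∃ m, ν.colLen 0 = m + 1 :=
    Nat.exists_eq_add_one.mpr (YoungDiagram.mem_iff_lt_colLen.mp h)
  obtain ⟨s, hs⟩ : ∃ s, ν.rowLen 0 = s + 1 :=
    Nat.exists_eq_add_one.mpr (YoungDiagram.mem_iff_lt_rowLen.mp h)
  refine ⟨((List.range m).reverse.map fun i => (i, 0)) ++
    ((List.range s).map Nat.succ).flatMap
      (fun j => (List.range (ν.colLen j)).reverse.map fun i => (i, j)), ?_, by simp [hm]⟩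
  rw [colReadingCells, hs, List.range_succ_eq_map, List.flatMap_cons, hm, List.range_succ]
  simp

end ReadingWords

section CornerFlip

variable {n : ℕ} {ν : YoungDiagram} {T : Filling n}

lemma wWord_flipBar_swCorner (h : (0, 0) ∈ ν) {k : Fin n}
    (hk : T (ν.colLen 0 - 1, 0) = some (true, k)) :
    wWord ν (flipBar (ν.colLen 0 - 1, 0) T) = wWord ν T := by
  obtain ⟨lu, hlu, hclu⟩ := rowReadingCells_eq_concat h
  obtain ⟨lv, hlv, hclv⟩ := colReadingCells_eq_cons h
  simp only [wWord, uWord_eq_filterMap, vWord_eq_filterMap, hlu, hlv, List.filterMap_append,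
    List.filterMap_cons, filterMap_flipBar_of_notMem _ hclu, filterMap_flipBar_of_notMem _ hclv,
    flipBar_apply_self, hk]
  simp [toggleBar, unbarredEntry, barredEntry]

lemma isColoredTableau_flipBar_swCorner (hT : IsColoredTableau (natOrd n) ν T) :
    IsColoredTableau (natOrd n) ν (flipBar (ν.colLen 0 - 1, 0) T) :=
  isColoredTableau_flipBar hT rfl fun _ hi => by
    have := YoungDiagram.mem_iff_lt_colLen.mp hi
    dsimp only at this
    omega

end CornerFlip

lemma IsColoredTableau.exists_eq_some_of_map_fst {n : ℕ} {r : Letter n → Letter n → Prop}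
    {ν : YoungDiagram} {T : Filling n} (hT : IsColoredTableau r ν T) {c : ℕ × ℕ} {b : Bool}
    (h : (T c).map Prod.fst = some b) : c ∈ ν ∧ ∃ k, T c = some (b, k) := by
  obtain ⟨⟨b', k⟩, hk, rfl⟩ := Option.map_eq_some_iff.mp h
  exact ⟨(hT.1 c).mp (by simp [hk]), k, hk⟩

theorem count_barred_corner_eq_count_unbarred_corner_general {n d : ℕ} (hd : 1 ≤ d)
    (lam : Fin n → ℕ)
    (ν : YoungDiagram) :
    {T : Filling n | IsColoredTableau (natOrd n) ν T ∧
      (∀ i, totalContent ν T i = lam i) ∧ totalColor ν T = d ∧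
      IsBallot (wWord ν T) ∧ (T (ν.colLen 0 - 1, 0)).map Prod.fst = some true}.ncard =
    {T : Filling n | IsColoredTableau (natOrd n) ν T ∧
      (∀ i, totalContent ν T i = lam i) ∧ totalColor ν T = d - 1 ∧
      IsBallot (wWord ν T) ∧ (T (ν.colLen 0 - 1, 0)).map Prod.fst = some false}.ncard := by
  refine (flipBar_involutive (ν.colLen 0 - 1, 0)).ncard_eq_of_mapsTo ?_ ?_
  · rintro T ⟨hT, hcont, hcolor, hball, hcorner⟩
    obtain ⟨hc, k, hk⟩ := hT.exists_eq_some_of_map_fst hcorner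
    have hcolor' := totalColor_flipBar hc hk
    have hword := wWord_flipBar_swCorner (ν.up_left_mem (Nat.zero_le _) le_rfl hc) hk
    exact ⟨isColoredTableau_flipBar_swCorner hT, fun i => (totalContent_flipBar ν i).trans (hcont i),
      by omega, hword ▸ hball, by simp [flipBar_apply_self, hk, toggleBar]⟩
  · rintro T ⟨hT, hcont, hcolor, hball, hcorner⟩
    obtain ⟨hc, k, hk⟩ := hT.exists_eq_some_of_map_fst hcorner
    have hk' : flipBar (ν.colLen 0 - 1, 0) T (ν.colLen 0 - 1, 0) = some (true, k) := by
      simp [flipBar_apply_self, hk, toggleBar]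
    have hcolor' := totalColor_flipBar hc hk'
    have hword := wWord_flipBar_swCorner (ν.up_left_mem (Nat.zero_le _) le_rfl hc) hk'
    rw [flipBar_involutive] at hcolor' hword
    exact ⟨isColoredTableau_flipBar_swCorner hT, fun i => (totalContent_flipBar ν i).trans (hcont i),
      by omega, hword ▸ hball, by simp [hk']⟩

/-- For the natural order and `d ≥ 1`, the number of colored Yamanouchi
tableaux of shape `ν`, content `λ` and total color `d` with barred southwest corner equals
the number of colored Yamanouchi tableaux of shape `ν`, content `λ` and total color `d − 1`
with unbarred southwest corner. -/
theorem count_barred_corner_eq_count_unbarred_corner {n d : ℕ} (hd : 1 ≤ d)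
    (lam : Fin n → ℕ) (hlam : Antitone lam) (hsum : ∑ i, lam i = n)
    (ν : YoungDiagram) (hν : ν.card = n) :
    {T : Filling n | IsColoredTableau (natOrd n) ν T ∧
      (∀ i, totalContent ν T i = lam i) ∧ totalColor ν T = d ∧
      IsBallot (wWord ν T) ∧ (T (ν.colLen 0 - 1, 0)).map Prod.fst = some true}.ncard =
    {T : Filling n | IsColoredTableau (natOrd n) ν T ∧
      (∀ i, totalContent ν T i = lam i) ∧ totalColor ν T = d - 1 ∧
      IsBallot (wWord ν T) ∧ (T (ν.colLen 0 - 1, 0)).map Prod.fst = some false}.ncard :=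
  count_barred_corner_eq_count_unbarred_corner_general hd lam ν
end

section
/- Let ≺ be the small bar order 1̄≺2̄≺⋯≺n̄≺1≺2≺⋯≺n on 𝒜ₙ, let λ and ν be partitions of n, and let 0 ≤ d ≤ n. Then the number of colored tableaux of shape ν with respect to ≺, with content λ and total color d, whose total reverse reading word is a ballot sequence, equals the number of triples (β, Q, P) in which β is a partition of d whose Young diagram is contained in that of ν, Q is a semistandard skew tableau of shape ν/β with entries in {1,…,n}, P is a semistandard tableau of shape β′ (the conjugate of β) with entries in {1,…,n}, the combined content of Q and P is λ (for each i, the total number of i's in Q and P is λᵢ), and the concatenation of the reverse row reading word of Q followed by the reverse row reading word of P is a ballot sequence. -/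
open scoped Classical

/-!
For the small bar order every barred letter precedes every unbarred one, so in a colored tableau
`T` of shape `ν` the barred entries fill a Young diagram `β ≤ ν` and the unbarred ones the skew
shape `ν / β`. The unbarred part is a semistandard skew tableau `Q`; since barred letters may
repeat down a column but not along a row, the transpose of the barred part is a semistandard
tableau `P` of shape `β′`. Conversely any such `(β, Q, P)` glues back to a colored tableau. The
splitting preserves content and color, and it turns `u(T)` into the reverse reading word of `Q`
and `v(T)` (read along the columns of `β`) into that of `P`, so the ballot conditions agree.
-/

section SmallBarOrd

variable {n : ℕ}

@[simp] lemma smallBarOrd_false_false {a a' : Fin n} :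
    smallBarOrd n (false, a) (false, a') ↔ a ≤ a' := by
  simp [smallBarOrd]

@[simp] lemma smallBarOrd_true_true {b b' : Fin n} :
    smallBarOrd n (true, b) (true, b') ↔ b ≤ b' := by
  simp [smallBarOrd]

@[simp] lemma smallBarOrd_true_false {b a : Fin n} : smallBarOrd n (true, b) (false, a) :=
  Or.inl ⟨rfl, rfl⟩

@[simp] lemma smallBarOrd_not_false_true {a b : Fin n} :
    ¬ smallBarOrd n (false, a) (true, b) := by
  simp [smallBarOrd]

end SmallBarOrd

namespace IsSkewSSYT

variable {n : ℕ} {outer inner : YoungDiagram} {f : ℕ × ℕ → Option (Fin n)}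

lemma col_le (hf : IsSkewSSYT outer inner f) {i₁ i₂ j : ℕ} {x y : Fin n} (hi : i₁ ≤ i₂)
    (hx : f (i₁, j) = some x) (hy : f (i₂, j) = some y) : x ≤ y := by
  rcases hi.lt_or_eq with hi | rfl
  · exact (hf.2.2 i₁ i₂ j x y hi hx hy).le
  · exact (Option.some.inj (hx.symm.trans hy)).le

lemma col_inj (hf : IsSkewSSYT outer inner f) {i₁ i₂ j : ℕ} {x : Fin n}
    (h₁ : f (i₁, j) = some x) (h₂ : f (i₂, j) = some x) : i₁ = i₂ := by
  by_contra hne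
  rcases Nat.lt_or_gt_of_ne hne with h | h
  · exact lt_irrefl x (hf.2.2 _ _ j x x h h₁ h₂)
  · exact lt_irrefl x (hf.2.2 _ _ j x x h h₂ h₁)

end IsSkewSSYT

section Parts

variable {n : ℕ}

def unbarredPart (T : Filling n) (c : ℕ × ℕ) : Option (Fin n) :=
  match T c with
  | some (false, a) => some a
  | _ => none

def barredPart (T : Filling n) (c : ℕ × ℕ) : Option (Fin n) :=
  match T c with
  | some (true, b) => some b
  | _ => none

variable {T : Filling n} {c : ℕ × ℕ}

@[simp] lemma unbarredPart_eq_some {a : Fin n} :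
    unbarredPart T c = some a ↔ T c = some (false, a) := by
  unfold unbarredPart
  rcases T c with _ | ⟨_ | _, _⟩ <;> simp

@[simp] lemma barredPart_eq_some {b : Fin n} :
    barredPart T c = some b ↔ T c = some (true, b) := by
  unfold barredPart
  rcases T c with _ | ⟨_ | _, _⟩ <;> simp

lemma isSome_barredPart_iff : (barredPart T c).isSome ↔ ∃ b, T c = some (true, b) := by
  simp [Option.isSome_iff_exists]

lemma uWord_eq_revRowWord (sh : YoungDiagram) (T : Filling n) :
    uWord sh T = revRowWord sh (unbarredPart T) := rfl

lemma revRowWord_transpose_barredPart (β : YoungDiagram) (T : Filling n) :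
    revRowWord β.transpose (barredPart T ∘ Prod.swap) = vWord β T := by
  simp only [revRowWord, YoungDiagram.colLen_transpose, YoungDiagram.rowLen_transpose]
  rfl

end Parts

lemma YoungDiagram.rowLen_le_of_le {μ ν : YoungDiagram} (h : μ ≤ ν) (i : ℕ) :
    μ.rowLen i ≤ ν.rowLen i := by
  by_contra! hc
  exact lt_irrefl _ (YoungDiagram.mem_iff_lt_rowLen.1 (h (YoungDiagram.mem_iff_lt_rowLen.2 hc)))

lemma YoungDiagram.colLen_le_of_le {μ ν : YoungDiagram} (h : μ ≤ ν) (j : ℕ) :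
    μ.colLen j ≤ ν.colLen j := by
  simpa only [YoungDiagram.rowLen_transpose] using
    YoungDiagram.rowLen_le_of_le (YoungDiagram.transpose_mono h) j

lemma List.flatMap_range_of_le {α : Type*} {m m' : ℕ} (h : m ≤ m') {f : ℕ → List α}
    (hf : ∀ k, m ≤ k → f k = []) : (List.range m').flatMap f = (List.range m).flatMap f := by
  obtain ⟨t, rfl⟩ := Nat.exists_eq_add_of_le h
  simp [List.range_add, hf]

lemma List.filterMap_reverse_range_of_le {α : Type*} {m m' : ℕ} (h : m ≤ m')
    {f : ℕ → Option α} (hf : ∀ k, m ≤ k → f k = none) :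
    (List.range m').reverse.filterMap f = (List.range m).reverse.filterMap f := by
  rw [List.filterMap_reverse, List.filterMap_reverse, List.filterMap_eq_flatMap_toList,
    List.filterMap_eq_flatMap_toList, List.flatMap_range_of_le h fun k hk => by simp [hf k hk]]

section Words

variable {n : ℕ}

lemma vWord_eq_flatMap_barredPart (sh : YoungDiagram) (T : Filling n) :
    vWord sh T = (List.range (sh.rowLen 0)).flatMap fun j =>
      (List.range (sh.colLen j)).reverse.filterMap fun i => barredPart T (i, j) := rfl

lemma vWord_eq_of_le {β ν : YoungDiagram} {T : Filling n} (hβν : β ≤ ν)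
    (hβ : ∀ c, (barredPart T c).isSome → c ∈ β) : vWord ν T = vWord β T := by
  have hnone : ∀ i j, (i, j) ∉ β → barredPart T (i, j) = none := fun i j h =>
    Option.not_isSome_iff_eq_none.1 (mt (hβ _) h)
  rw [vWord_eq_flatMap_barredPart, vWord_eq_flatMap_barredPart,
    List.flatMap_range_of_le (YoungDiagram.rowLen_le_of_le hβν 0)]
  · refine List.flatMap_congr fun j _ => List.filterMap_reverse_range_of_le
      (YoungDiagram.colLen_le_of_le hβν j) fun i hi => hnone i j ?_
    rwa [YoungDiagram.mem_iff_lt_colLen, not_lt]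
  · intro j hj
    refine List.filterMap_eq_nil_iff.2 fun i _ => hnone i j fun hij => ?_
    exact absurd (YoungDiagram.mem_iff_lt_rowLen.1 (β.up_left_mem (Nat.zero_le i) le_rfl hij))
      (not_lt.2 hj)

variable {β ν : YoungDiagram} {T : Filling n}

lemma wWord_eq (hβν : β ≤ ν) (hβ : ∀ c, c ∈ β ↔ (barredPart T c).isSome) :
    wWord ν T =
      revRowWord ν (unbarredPart T) ++ revRowWord β.transpose (barredPart T ∘ Prod.swap) := by
  rw [wWord, uWord_eq_revRowWord, revRowWord_transpose_barredPart,
    vWord_eq_of_le hβν fun c => (hβ c).2]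

lemma totalColor_eq (hβν : β ≤ ν) (hβ : ∀ c, c ∈ β ↔ (barredPart T c).isSome) :
    totalColor ν T = β.card := by
  unfold totalColor
  congr 1
  ext c
  rw [Finset.mem_filter, YoungDiagram.mem_cells, YoungDiagram.mem_cells, hβ,
    isSome_barredPart_iff]
  simp only [Option.map_eq_some_iff, Prod.exists, exists_and_right, exists_eq_right,
    and_iff_right_iff_imp]
  exact fun ⟨b, hb⟩ => hβν ((hβ c).2 (isSome_barredPart_iff.2 ⟨b, hb⟩))

lemma totalContent_eq (hβν : β ≤ ν) (hβ : ∀ c, c ∈ β ↔ (barredPart T c).isSome)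
    (i : Fin n) :
    totalContent ν T i = (ν.cells.filter fun c => unbarredPart T c = some i).card +
      (β.transpose.cells.filter fun c => (barredPart T ∘ Prod.swap) c = some i).card := by
  unfold totalContent
  rw [Finset.filter_or, Finset.card_union_of_disjoint]
  · congr 1
    · simp only [unbarredPart_eq_some]
    · refine Finset.card_equiv (Equiv.prodComm _ _) fun c => ?_
      simp only [Finset.mem_filter, YoungDiagram.mem_cells, YoungDiagram.mem_transpose,
        Equiv.prodComm_apply, Prod.swap_swap, Function.comp_apply, barredPart_eq_some]
      refine and_congr_left fun hc => ⟨fun _ => ?_, fun h => hβν h⟩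
      exact (hβ c).2 (isSome_barredPart_iff.2 ⟨i, hc⟩)
  · exact Finset.disjoint_filter.2 fun c _ h₁ h₂ => by simp [h₁] at h₂

end Words

section FillingOfParts

variable {n : ℕ}

def fillingOfParts (β : YoungDiagram) (Q P : ℕ × ℕ → Option (Fin n)) : Filling n := fun c =>
  if c ∈ β then (P c.swap).map ((true, ·)) else (Q c).map ((false, ·))

variable {β ν : YoungDiagram} {Q P : ℕ × ℕ → Option (Fin n)}

lemma unbarredPart_fillingOfParts (hQ : IsSkewSSYT ν β Q) :
    unbarredPart (fillingOfParts β Q P) = Q := by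
  funext c
  by_cases hc : c ∈ β
  · have hQc : Q c = none := Option.not_isSome_iff_eq_none.1 fun h => ((hQ.1 c).1 h).2 hc
    rcases P c.swap with _ | b <;> simp [unbarredPart, fillingOfParts, hc, hQc]
  · rcases hQc : Q c with _ | a <;> simp [unbarredPart, fillingOfParts, hc, hQc]

lemma barredPart_fillingOfParts_apply (hP : IsSkewSSYT β.transpose ⊥ P) (c : ℕ × ℕ) :
    barredPart (fillingOfParts β Q P) c = P c.swap := by
  by_cases hc : c ∈ β
  · rcases hPc : P c.swap with _ | b <;> simp [barredPart, fillingOfParts, hc, hPc]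
  · have hPc : P c.swap = none := Option.not_isSome_iff_eq_none.1 fun h =>
      hc (YoungDiagram.mem_transpose.1 ((hP.1 _).1 h).1)
    rcases Q c with _ | a <;> simp [barredPart, fillingOfParts, hc, hPc]

lemma barredPart_fillingOfParts (hP : IsSkewSSYT β.transpose ⊥ P) :
    barredPart (fillingOfParts β Q P) ∘ Prod.swap = P :=
  funext fun c => by simp [barredPart_fillingOfParts_apply hP]

lemma mem_iff_isSome_barredPart_fillingOfParts (hP : IsSkewSSYT β.transpose ⊥ P)
    (c : ℕ × ℕ) :
    c ∈ β ↔ (barredPart (fillingOfParts β Q P) c).isSome := by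
  rw [barredPart_fillingOfParts_apply hP, hP.1, YoungDiagram.mem_transpose, Prod.swap_swap]
  simp

lemma smallBarOrd_fillingOfParts {c c' : ℕ × ℕ} (hcc' : c ≤ c') {x y : Letter n}
    (hx : fillingOfParts β Q P c = some x) (hy : fillingOfParts β Q P c' = some y)
    (hQ : ∀ a a', Q c = some a → Q c' = some a' → a ≤ a')
    (hP : ∀ b b', P c.swap = some b → P c'.swap = some b' → b ≤ b') :
    smallBarOrd n x y := by
  by_cases hc' : c' ∈ β
  · have hc : c ∈ β := β.isLowerSet hcc' hc'
    simp only [fillingOfParts, hc, hc', if_true, Option.map_eq_some_iff] at hx hy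
    obtain ⟨b, hb, rfl⟩ := hx
    obtain ⟨b', hb', rfl⟩ := hy
    exact smallBarOrd_true_true.2 (hP b b' hb hb')
  · simp only [fillingOfParts, hc', if_false, Option.map_eq_some_iff] at hy
    obtain ⟨a', ha', rfl⟩ := hy
    by_cases hc : c ∈ β
    · simp only [fillingOfParts, hc, if_true, Option.map_eq_some_iff] at hx
      obtain ⟨b, -, rfl⟩ := hx
      exact smallBarOrd_true_false
    · simp only [fillingOfParts, hc, if_false, Option.map_eq_some_iff] at hx
      obtain ⟨a, ha, rfl⟩ := hx
      exact smallBarOrd_false_false.2 (hQ a a' ha ha')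

lemma isColoredTableau_fillingOfParts (hβν : β ≤ ν) (hQ : IsSkewSSYT ν β Q)
    (hP : IsSkewSSYT β.transpose ⊥ P) :
    IsColoredTableau (smallBarOrd n) ν (fillingOfParts β Q P) := by
  refine ⟨fun c => ?_, fun i j₁ j₂ x y hj hx hy => ?_, fun i₁ i₂ j x y hi hx hy => ?_,
    fun i₁ i₂ j a hne hx hy => ?_, fun i j₁ j₂ b hne hx hy => ?_⟩
  · by_cases hc : c ∈ β
    · simpa [fillingOfParts, hc, hP.1, YoungDiagram.mem_transpose] using hβν hc
    · simp [fillingOfParts, hc, hQ.1]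
  · exact smallBarOrd_fillingOfParts (Prod.mk_le_mk.2 ⟨le_rfl, hj⟩) hx hy
      (fun a a' => hQ.2.1 i j₁ j₂ a a' hj) (fun b b' => hP.col_le hj)
  · exact smallBarOrd_fillingOfParts (Prod.mk_le_mk.2 ⟨hi, le_rfl⟩) hx hy
      (fun a a' => hQ.col_le hi) (fun b b' => hP.2.1 j i₁ i₂ b b' hi)
  · rw [← unbarredPart_eq_some, unbarredPart_fillingOfParts hQ] at hx hy
    exact hne (hQ.col_inj hx hy)
  · rw [← barredPart_eq_some, barredPart_fillingOfParts_apply hP] at hx hy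
    exact hne (hP.col_inj hx hy)

lemma fillingOfParts_inj {ν' β' : YoungDiagram} {Q' P' : ℕ × ℕ → Option (Fin n)}
    (hQ : IsSkewSSYT ν β Q) (hP : IsSkewSSYT β.transpose ⊥ P)
    (hQ' : IsSkewSSYT ν' β' Q') (hP' : IsSkewSSYT β'.transpose ⊥ P')
    (h : fillingOfParts β Q P = fillingOfParts β' Q' P') : β = β' ∧ Q = Q' ∧ P = P' := by
  refine ⟨SetLike.ext fun c => ?_, ?_, ?_⟩
  · rw [mem_iff_isSome_barredPart_fillingOfParts hP, h,
      ← mem_iff_isSome_barredPart_fillingOfParts hP']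
  · rw [← unbarredPart_fillingOfParts hQ, h, unbarredPart_fillingOfParts hQ']
  · rw [← barredPart_fillingOfParts hP, h, barredPart_fillingOfParts hP']

end FillingOfParts

section Split

variable {n : ℕ} {ν : YoungDiagram} {T : Filling n}

lemma fillingOfParts_unbarredPart_barredPart {β : YoungDiagram}
    (hβ : ∀ c, c ∈ β ↔ (barredPart T c).isSome) :
    fillingOfParts β (unbarredPart T) (barredPart T ∘ Prod.swap) = T := by
  funext c
  have hc := hβ c
  rcases hTc : T c with _ | ⟨_ | _, a⟩ <;> simp_all [fillingOfParts, unbarredPart, barredPart]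

lemma IsColoredTableau.isLowerSet_barredCells (hT : IsColoredTableau (smallBarOrd n) ν T) :
    IsLowerSet {c | (barredPart T c).isSome} := by
  intro c' c hle hc'
  obtain ⟨b, hb⟩ := isSome_barredPart_iff.1 hc'
  have hmem : ∀ e, e ≤ c' → ∃ x, T e = some x := fun e he => Option.isSome_iff_exists.1 <|
    (hT.1 e).2 (ν.isLowerSet he ((hT.1 c').1 (by simp [hb])))
  -- The cell in the row of `c` and the column of `c'` sits between an entry of `T c` and `b̄`.
  obtain ⟨x, hx⟩ := hmem c hle
  obtain ⟨y, hy⟩ := hmem (c.1, c'.2) (Prod.mk_le_mk.2 ⟨hle.1, le_rfl⟩)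
  have hxy := hT.2.1 c.1 c.2 c'.2 x y hle.2 hx hy
  have hyb := hT.2.2.1 c.1 c'.1 c'.2 y (true, b) hle.1 hy hb
  rcases x with ⟨_ | _, a⟩
  · rcases y with ⟨_ | _, _⟩ <;> simp at hxy hyb
  · exact isSome_barredPart_iff.2 ⟨a, hx⟩

def barredShape (hT : IsColoredTableau (smallBarOrd n) ν T) : YoungDiagram where
  cells := ν.cells.filter fun c => (barredPart T c).isSome
  isLowerSet := by
    rw [Finset.coe_filter]
    exact ν.isLowerSet.inter hT.isLowerSet_barredCells

variable (hT : IsColoredTableau (smallBarOrd n) ν T)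

lemma mem_barredShape (c : ℕ × ℕ) : c ∈ barredShape hT ↔ (barredPart T c).isSome := by
  refine ⟨fun h => (Finset.mem_filter.1 h).2, fun h => Finset.mem_filter.2 ⟨?_, h⟩⟩
  obtain ⟨b, hb⟩ := isSome_barredPart_iff.1 h
  exact (hT.1 c).1 (by simp [hb])

lemma barredShape_le : barredShape hT ≤ ν := fun _ hc => (Finset.mem_filter.1 hc).1

lemma isSkewSSYT_unbarredPart : IsSkewSSYT ν (barredShape hT) (unbarredPart T) := by
  refine ⟨fun c => ?_, fun i j₁ j₂ x y hj hx hy => ?_, fun i₁ i₂ j x y hi hx hy => ?_⟩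
  · have hc := hT.1 c
    rw [mem_barredShape hT]
    rcases hTc : T c with _ | ⟨_ | _, a⟩ <;> simp_all [unbarredPart, barredPart]
  · rw [unbarredPart_eq_some] at hx hy
    exact smallBarOrd_false_false.1 (hT.2.1 i j₁ j₂ _ _ hj hx hy)
  · rw [unbarredPart_eq_some] at hx hy
    refine (smallBarOrd_false_false.1 (hT.2.2.1 i₁ i₂ j _ _ hi.le hx hy)).lt_of_ne ?_
    rintro rfl
    exact hT.2.2.2.1 i₁ i₂ j x hi.ne hx hy

lemma isSkewSSYT_barredPart :
    IsSkewSSYT (barredShape hT).transpose ⊥ (barredPart T ∘ Prod.swap) := by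
  refine ⟨fun c => ?_, fun i j₁ j₂ x y hj hx hy => ?_, fun i₁ i₂ j x y hi hx hy => ?_⟩
  · simp [YoungDiagram.mem_transpose, mem_barredShape hT]
  · simp only [Function.comp_apply, Prod.swap_prod_mk, barredPart_eq_some] at hx hy
    exact smallBarOrd_true_true.1 (hT.2.2.1 j₁ j₂ i _ _ hj hx hy)
  · simp only [Function.comp_apply, Prod.swap_prod_mk, barredPart_eq_some] at hx hy
    refine (smallBarOrd_true_true.1 (hT.2.1 j i₁ i₂ _ _ hi.le hx hy)).lt_of_ne ?_
    rintro rfl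
    exact hT.2.2.2.2 j i₁ i₂ x hi.ne hx hy

end Split

theorem count_colored_yamanouchi_eq_count_triples_general {n d : ℕ} (lam : Fin n → ℕ)
    (ν : YoungDiagram) :
    {T : Filling n | IsColoredTableau (smallBarOrd n) ν T ∧
      (∀ i, totalContent ν T i = lam i) ∧ totalColor ν T = d ∧
      IsBallot (wWord ν T)}.ncard =
    {bqp : YoungDiagram × (ℕ × ℕ → Option (Fin n)) × (ℕ × ℕ → Option (Fin n)) |
      bqp.1.card = d ∧ bqp.1 ≤ ν ∧
      IsSkewSSYT ν bqp.1 bqp.2.1 ∧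
      IsSkewSSYT bqp.1.transpose ⊥ bqp.2.2 ∧
      (∀ i : Fin n,
        (ν.cells.filter fun c => bqp.2.1 c = some i).card +
          ((bqp.1.transpose).cells.filter fun c => bqp.2.2 c = some i).card = lam i) ∧
      IsBallot (revRowWord ν bqp.2.1 ++ revRowWord bqp.1.transpose bqp.2.2)}.ncard := by
  symm
  refine Set.ncard_congr (fun bqp _ => fillingOfParts bqp.1 bqp.2.1 bqp.2.2) ?_ ?_ ?_
  · rintro ⟨β, Q, P⟩ ⟨hcard, hβν, hQ, hP, hcont, hball⟩
    have hβ := mem_iff_isSome_barredPart_fillingOfParts (Q := Q) hP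
    refine ⟨isColoredTableau_fillingOfParts hβν hQ hP, fun i => ?_, ?_, ?_⟩
    · rw [totalContent_eq hβν hβ, unbarredPart_fillingOfParts hQ, barredPart_fillingOfParts hP,
        hcont]
    · rw [totalColor_eq hβν hβ, hcard]
    · rwa [wWord_eq hβν hβ, unbarredPart_fillingOfParts hQ, barredPart_fillingOfParts hP]
  · rintro ⟨β, Q, P⟩ ⟨β', Q', P'⟩ ⟨-, -, hQ, hP, -⟩ ⟨-, -, hQ', hP', -⟩ h
    obtain ⟨rfl, rfl, rfl⟩ := fillingOfParts_inj hQ hP hQ' hP' h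
    rfl
  · rintro T ⟨hT, hcont, hcol, hball⟩
    have hβ := mem_barredShape hT
    have hβν := barredShape_le hT
    refine ⟨(barredShape hT, unbarredPart T, barredPart T ∘ Prod.swap),
      ⟨?_, hβν, isSkewSSYT_unbarredPart hT, isSkewSSYT_barredPart hT, fun i => ?_, ?_⟩,
      fillingOfParts_unbarredPart_barredPart hβ⟩
    · rw [← totalColor_eq hβν hβ, hcol]
    · rw [← totalContent_eq hβν hβ, hcont]
    · rwa [← wWord_eq hβν hβ]

/-- For the small bar order, the number of colored tableaux of shape `ν`,
content `λ` and total color `d` whose total reverse reading word is a ballot sequence equals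
the number of triples `(β, Q, P)` with `β ⊢ d`, `β ⊆ ν`, `Q` a semistandard skew tableau of
shape `ν/β`, `P` a semistandard tableau of shape `β′`, combined content `λ`, and the
concatenation of the reverse reading words of `Q` and `P` a ballot sequence. -/
theorem count_colored_yamanouchi_eq_count_triples {n d : ℕ} (hd : d ≤ n)
    (lam : Fin n → ℕ) (hlam : Antitone lam) (hsum : ∑ i, lam i = n)
    (ν : YoungDiagram) (hν : ν.card = n) :
    {T : Filling n | IsColoredTableau (smallBarOrd n) ν T ∧
      (∀ i, totalContent ν T i = lam i) ∧ totalColor ν T = d ∧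
      IsBallot (wWord ν T)}.ncard =
    {bqp : YoungDiagram × (ℕ × ℕ → Option (Fin n)) × (ℕ × ℕ → Option (Fin n)) |
      bqp.1.card = d ∧ bqp.1 ≤ ν ∧
      IsSkewSSYT ν bqp.1 bqp.2.1 ∧
      IsSkewSSYT bqp.1.transpose ⊥ bqp.2.2 ∧
      (∀ i : Fin n,
        (ν.cells.filter fun c => bqp.2.1 c = some i).card +
          ((bqp.1.transpose).cells.filter fun c => bqp.2.2 c = some i).card = lam i) ∧
      IsBallot (revRowWord ν bqp.2.1 ++ revRowWord bqp.1.transpose bqp.2.2)}.ncard :=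
  count_colored_yamanouchi_eq_count_triples_general lam ν
end
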